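/- arXiv:1502.05032 — 2 statements merged into one kernel-verified Lean document; each statement's English description precedes it below -/
import Mathlib

section
/- Let Ω be a finite nonempty set, P* a strictly positive probability distribution on Ω, and suppose -ln P*(ω) = ∑_{i=1}^r λ_i h_i(ω) + ξ for real constants λ_i, ξ and functions h_i : Ω → ℝ. Then for any probability distribution P on Ω satisfying ∑_ω h_i(ω) P(ω) = ∑_ω h_i(ω) P*(ω) for all i = 1,…,r, the entropy satisfies S(P) ≤ S(P*), with equality if and only if P = P*. (Theorem 11.1.1 of Cover–Thomas: any exponential-family distribution uniquely maximizes entropy subject to matching the expectations of its sufficient statistics.) -/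
open Finset

/-- Cover–Thomas Theorem 11.1.1: an exponential-family distribution `P*` with
`-ln P*(ω) = ∑ i, λ i * h i ω + ξ` uniquely maximizes entropy among all distributions
matching the expectations of the sufficient statistics `h i`. -/
theorem exponential_family_maximum_entropy
    {Ω : Type*} [Fintype Ω] [Nonempty Ω] (r : ℕ)
    (P Pstar : Ω → ℝ) (h : Fin r → Ω → ℝ) (lam : Fin r → ℝ) (ξ : ℝ)
    (hP0 : ∀ ω, 0 ≤ P ω) (hP1 : ∑ ω, P ω = 1)
    (hPs0 : ∀ ω, 0 < Pstar ω) (hPs1 : ∑ ω, Pstar ω = 1)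
    (hexp : ∀ ω, -Real.log (Pstar ω) = (∑ i, lam i * h i ω) + ξ)
    (hconstraint : ∀ i, ∑ ω, h i ω * P ω = ∑ ω, h i ω * Pstar ω) :
    (-∑ ω, P ω * Real.log (P ω)) ≤ (-∑ ω, Pstar ω * Real.log (Pstar ω)) ∧
    ((-∑ ω, P ω * Real.log (P ω)) = (-∑ ω, Pstar ω * Real.log (Pstar ω)) ↔ P = Pstar) := by
  classical
  -- Step 1: ∑ Q log P* is the same for any Q matching the constraints.
  have e : ∀ (Q : Ω → ℝ), (∑ ω, Q ω = 1) →
      ∑ ω, Q ω * Real.log (Pstar ω)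
        = -(∑ i, lam i * ∑ ω, h i ω * Q ω) - ξ := by
    intro Q hQ
    have step : ∑ ω, Q ω * Real.log (Pstar ω)
        = ∑ ω, (-(∑ i, lam i * (h i ω * Q ω)) - ξ * Q ω) := by
      apply Finset.sum_congr rfl
      intro ω _
      have hlog : Real.log (Pstar ω) = -((∑ i, lam i * h i ω) + ξ) := by
        have := hexp ω; linarith
      have hs : (∑ i, lam i * (h i ω * Q ω)) = (∑ i, lam i * h i ω) * Q ω := by
        rw [Finset.sum_mul]
        exact Finset.sum_congr rfl fun i _ => (mul_assoc _ _ _).symm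
      rw [hlog, hs]; ring
    rw [step, Finset.sum_sub_distrib, ← Finset.mul_sum, hQ, mul_one]
    congr 1
    rw [Finset.sum_neg_distrib, Finset.sum_comm]
    congr 1
    apply Finset.sum_congr rfl
    intro i _
    rw [Finset.mul_sum]
  have hkey : ∑ ω, P ω * Real.log (Pstar ω) = ∑ ω, Pstar ω * Real.log (Pstar ω) := by
    rw [e P hP1, e Pstar hPs1]
    congr 2
    exact Finset.sum_congr rfl fun i _ => by rw [hconstraint i]
  -- Step 2: termwise Gibbs inequality.
  set f : Ω → ℝ := fun ω =>
    Pstar ω - P ω + P ω * Real.log (P ω) - P ω * Real.log (Pstar ω) with hf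
  have hf0 : ∀ ω, 0 ≤ f ω := by
    intro ω
    rcases eq_or_lt_of_le (hP0 ω) with h0 | h0
    · simp [hf, ← h0]
      linarith [hPs0 ω]
    · have hx : (0:ℝ) < Pstar ω / P ω := div_pos (hPs0 ω) h0
      have := Real.log_le_sub_one_of_pos hx
      rw [Real.log_div (hPs0 ω).ne' h0.ne'] at this
      have h2 : P ω * (Real.log (Pstar ω) - Real.log (P ω)) ≤ P ω * (Pstar ω / P ω - 1) :=
        mul_le_mul_of_nonneg_left this h0.le
      have h3 : P ω * (Pstar ω / P ω - 1) = Pstar ω - P ω := by field_simp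
      rw [h3] at h2
      simp only [hf]
      nlinarith
  have hfeq : ∀ ω, f ω = 0 ↔ P ω = Pstar ω := by
    intro ω
    constructor
    · intro h0
      by_contra hne
      rcases eq_or_lt_of_le (hP0 ω) with hz | hz
      · simp [hf, ← hz] at h0
        exact (hPs0 ω).ne' h0
      · have hx : (0:ℝ) < Pstar ω / P ω := div_pos (hPs0 ω) hz
        have hx1 : Pstar ω / P ω ≠ 1 := by
          intro h1
          exact hne ((div_eq_one_iff_eq hz.ne').mp h1).symm
        have hlt := Real.log_lt_sub_one_of_pos hx hx1
        rw [Real.log_div (hPs0 ω).ne' hz.ne'] at hlt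
        have h2 : P ω * (Real.log (Pstar ω) - Real.log (P ω)) < P ω * (Pstar ω / P ω - 1) :=
          mul_lt_mul_of_pos_left hlt hz
        have h3 : P ω * (Pstar ω / P ω - 1) = Pstar ω - P ω := by field_simp
        rw [h3] at h2
        simp only [hf] at h0
        nlinarith
    · intro h0
      simp [hf, h0]
  -- Step 3: the sum of f equals the entropy gap.
  have hsum : ∑ ω, f ω
      = (-∑ ω, Pstar ω * Real.log (Pstar ω)) - (-∑ ω, P ω * Real.log (P ω)) := by
    simp only [hf]
    rw [Finset.sum_sub_distrib, Finset.sum_add_distrib, Finset.sum_sub_distrib,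
      hP1, hPs1, hkey]
    ring
  have hnn : 0 ≤ ∑ ω, f ω := Finset.sum_nonneg fun ω _ => hf0 ω
  constructor
  · linarith [hsum ▸ hnn]
  · constructor
    · intro heq
      have hz : ∑ ω, f ω = 0 := by rw [hsum, heq]; ring
      have := (Finset.sum_eq_zero_iff_of_nonneg (fun ω _ => hf0 ω)).mp hz
      funext ω
      exact (hfeq ω).mp (this ω (Finset.mem_univ ω))
    · intro heq
      rw [heq]
end

section
/- The Kahle distribution on simplicial complexes on 3 vertices, P_Δ(C) = p₁^{f₁(C)}(1-p₁)^{3-f₁(C)} p₂^{f₂(C)}(1-p₂)^{φ₂(C)-f₂(C)}, is the unique maximizer of entropy among all probability distributions P on 𝒞₃ satisfying the three constraints E_P[f₁] = 3p₁, E_P[f₂] = p₁³p₂, and E_P[φ₂] = p₁³, for p₁, p₂ ∈ (0,1). -/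
open Finset

/-- The set `𝒞₃` of simplicial complexes on vertex set `{1,2,3}` (containing all vertices),
encoded by the presence of the three edges and of the 2-simplex, with the closure condition
that the 2-simplex requires all three edges. -/
def C3 := {c : Bool × Bool × Bool × Bool // c.2.2.2 = true → (c.1 && c.2.1 && c.2.2.1) = true}

instance : Fintype C3 := by unfold C3; infer_instance

instance : DecidableEq C3 := by unfold C3; infer_instance

/-- Number of edges. -/
def f1 (C : C3) : ℕ :=
  (if C.1.1 then 1 else 0) + (if C.1.2.1 then 1 else 0) + (if C.1.2.2.1 then 1 else 0)

/-- Indicator of the 2-simplex. -/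
def f2 (C : C3) : ℕ := if C.1.2.2.2 then 1 else 0

/-- Indicator that all three edges are present. -/
def phi2 (C : C3) : ℕ := if C.1.1 && C.1.2.1 && C.1.2.2.1 then 1 else 0

/-- The Kahle distribution on `𝒞₃`:
`P_Δ(C) = p₁^{f₁}(1-p₁)^{3-f₁} p₂^{f₂}(1-p₂)^{φ₂-f₂}`. -/
def PDelta (p₁ p₂ : ℝ) (C : C3) : ℝ :=
  p₁ ^ f1 C * (1 - p₁) ^ (3 - f1 C) * p₂ ^ f2 C * (1 - p₂) ^ (phi2 C - f2 C)

/- ### Auxiliary material -/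

def rf1 (c : Bool × Bool × Bool × Bool) : ℕ :=
  (if c.1 then 1 else 0) + (if c.2.1 then 1 else 0) + (if c.2.2.1 then 1 else 0)
def rf2 (c : Bool × Bool × Bool × Bool) : ℕ := if c.2.2.2 then 1 else 0
def rphi2 (c : Bool × Bool × Bool × Bool) : ℕ := if c.1 && c.2.1 && c.2.2.1 then 1 else 0
def rawP (p₁ p₂ : ℝ) (c : Bool × Bool × Bool × Bool) : ℝ :=
  p₁ ^ rf1 c * (1 - p₁) ^ (3 - rf1 c) * p₂ ^ rf2 c * (1 - p₂) ^ (rphi2 c - rf2 c)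

lemma key (H : Bool × Bool × Bool × Bool → ℝ) :
    ∑ C : C3, H C.1 =
      H (false,false,false,false) + H (false,false,true,false) + H (false,true,false,false) +
      H (false,true,true,false) + H (true,false,false,false) + H (true,false,true,false) +
      H (true,true,false,false) + H (true,true,true,false) + H (true,true,true,true) := by
  calc ∑ C : C3, H C.1
      = ∑ a : {c : Bool × Bool × Bool × Bool // c.2.2.2 = true → (c.1 && c.2.1 && c.2.2.1) = true},
          H a.1 := rfl
    _ = ∑ c ∈ Finset.univ.filter (fun c : Bool × Bool × Bool × Bool =>
          c.2.2.2 = true → (c.1 && c.2.1 && c.2.2.1) = true), H c :=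
        (Finset.sum_subtype _ (by simp) H).symm
    _ = _ := by
        rw [Finset.sum_filter]
        simp only [Fintype.sum_prod_type, Fintype.sum_bool]
        norm_num
        ring

lemma f1_le (C : C3) : f1 C ≤ 3 := by unfold f1; split_ifs <;> simp

lemma f2_le (C : C3) : f2 C ≤ phi2 C := by
  unfold f2 phi2
  split_ifs with h h2
  · rfl
  · exact absurd (C.2 h) h2
  · exact Nat.zero_le _
  · rfl

lemma PDelta_pos (p₁ p₂ : ℝ) (hp₁ : p₁ ∈ Set.Ioo (0:ℝ) 1) (hp₂ : p₂ ∈ Set.Ioo (0:ℝ) 1)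
    (C : C3) : 0 < PDelta p₁ p₂ C := by
  unfold PDelta
  have h1 : (0:ℝ) < 1 - p₁ := by linarith [hp₁.2]
  have h2 : (0:ℝ) < 1 - p₂ := by linarith [hp₂.2]
  exact mul_pos (mul_pos (mul_pos (pow_pos hp₁.1 _) (pow_pos h1 _)) (pow_pos hp₂.1 _))
    (pow_pos h2 _)

lemma log_PDelta (p₁ p₂ : ℝ) (hp₁ : p₁ ∈ Set.Ioo (0:ℝ) 1) (hp₂ : p₂ ∈ Set.Ioo (0:ℝ) 1)
    (C : C3) :
    Real.log (PDelta p₁ p₂ C) =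
      (f1 C : ℝ) * Real.log p₁ + (3 - (f1 C : ℝ)) * Real.log (1 - p₁)
      + (f2 C : ℝ) * Real.log p₂ + ((phi2 C : ℝ) - (f2 C : ℝ)) * Real.log (1 - p₂) := by
  have h1 : (0:ℝ) < p₁ := hp₁.1
  have h2 : (0:ℝ) < 1 - p₁ := by linarith [hp₁.2]
  have h3 : (0:ℝ) < p₂ := hp₂.1
  have h4 : (0:ℝ) < 1 - p₂ := by linarith [hp₂.2]
  unfold PDelta
  rw [Real.log_mul (by positivity) (ne_of_gt (pow_pos h4 _)),
    Real.log_mul (by positivity) (ne_of_gt (pow_pos h3 _)),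
    Real.log_mul (ne_of_gt (pow_pos h1 _)) (ne_of_gt (pow_pos h2 _)),
    Real.log_pow, Real.log_pow, Real.log_pow, Real.log_pow]
  rw [Nat.cast_sub (f1_le C), Nat.cast_sub (f2_le C)]
  push_cast
  ring

/-- Any distribution satisfying the moment constraints has the same cross-entropy
against `PDelta`. -/
lemma expect_log_PDelta (p₁ p₂ : ℝ) (hp₁ : p₁ ∈ Set.Ioo (0:ℝ) 1) (hp₂ : p₂ ∈ Set.Ioo (0:ℝ) 1)
    (P : C3 → ℝ) (h0 : ∑ C, P C = 1)
    (h1 : ∑ C, (f1 C : ℝ) * P C = 3 * p₁)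
    (h2 : ∑ C, (f2 C : ℝ) * P C = p₁ ^ 3 * p₂)
    (h3 : ∑ C, (phi2 C : ℝ) * P C = p₁ ^ 3) :
    ∑ C, P C * Real.log (PDelta p₁ p₂ C) =
      3 * p₁ * Real.log p₁ + (3 - 3 * p₁) * Real.log (1 - p₁)
      + p₁ ^ 3 * p₂ * Real.log p₂ + (p₁ ^ 3 - p₁ ^ 3 * p₂) * Real.log (1 - p₂) := by
  have step : ∑ C, P C * Real.log (PDelta p₁ p₂ C) =
      ∑ C, (((f1 C : ℝ) * P C) * Real.log p₁ + (3 * P C - (f1 C : ℝ) * P C) * Real.log (1 - p₁)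
        + ((f2 C : ℝ) * P C) * Real.log p₂
        + ((phi2 C : ℝ) * P C - (f2 C : ℝ) * P C) * Real.log (1 - p₂)) :=
    Finset.sum_congr rfl fun C _ => by rw [log_PDelta p₁ p₂ hp₁ hp₂ C]; ring
  rw [step]
  rw [Finset.sum_add_distrib, Finset.sum_add_distrib, Finset.sum_add_distrib,
    ← Finset.sum_mul, ← Finset.sum_mul, ← Finset.sum_mul, ← Finset.sum_mul,
    Finset.sum_sub_distrib, Finset.sum_sub_distrib, ← Finset.mul_sum]
  rw [h0, h1, h2, h3]
  ring

lemma gibbs_term (p q : ℝ) (hp : 0 ≤ p) (hq : 0 < q) :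
    p * Real.log q - p * Real.log p ≤ q - p ∧
    (p * Real.log q - p * Real.log p = q - p ↔ p = q) := by
  rcases eq_or_lt_of_le hp with h | h
  · subst h
    refine ⟨by simp; linarith, ?_⟩
    constructor
    · intro hh; simp at hh; linarith
    · intro hh; simp [← hh]
  · have hd : 0 < q / p := div_pos hq h
    have hle : Real.log (q / p) ≤ q / p - 1 := Real.log_le_sub_one_of_pos hd
    have hlog : Real.log (q / p) = Real.log q - Real.log p := Real.log_div (ne_of_gt hq) (ne_of_gt h)
    have h2 : p * (q / p - 1) = q - p := by field_simp
    constructor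
    · have := mul_le_mul_of_nonneg_left hle (le_of_lt h)
      rw [hlog] at this
      nlinarith
    · constructor
      · intro he
        by_contra hne
        have hne' : q / p ≠ 1 := by
          intro h1
          apply hne
          field_simp at h1
          linarith
        have hlt : Real.log (q / p) < q / p - 1 := Real.log_lt_sub_one_of_pos hd hne'
        have := mul_lt_mul_of_pos_left hlt h
        rw [hlog] at this
        nlinarith
      · intro he; rw [he]; ring

lemma gibbs {α : Type*} [Fintype α] (P Q : α → ℝ) (hP : ∀ a, 0 ≤ P a) (hQ : ∀ a, 0 < Q a)
    (hsum : ∑ a, P a = ∑ a, Q a) :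
    ∑ a, P a * Real.log (Q a) ≤ ∑ a, P a * Real.log (P a) ∧
    (∑ a, P a * Real.log (Q a) = ∑ a, P a * Real.log (P a) ↔ P = Q) := by
  have hterm : ∀ a : α, P a * Real.log (Q a) - P a * Real.log (P a) ≤ Q a - P a :=
    fun a => (gibbs_term (P a) (Q a) (hP a) (hQ a)).1
  have hs : ∑ a, (P a * Real.log (Q a) - P a * Real.log (P a)) ≤ ∑ a, (Q a - P a) :=
    Finset.sum_le_sum fun a _ => hterm a
  have hz : ∑ a, (Q a - P a) = 0 := by
    rw [Finset.sum_sub_distrib, hsum]; ring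
  rw [Finset.sum_sub_distrib] at hs
  constructor
  · linarith [hs, hz.le]
  · constructor
    · intro he
      funext a
      by_contra hne
      have hstrict : ∑ x, (P x * Real.log (Q x) - P x * Real.log (P x)) < ∑ x, (Q x - P x) := by
        refine Finset.sum_lt_sum (fun i _ => hterm i) ⟨a, Finset.mem_univ a, ?_⟩
        rcases lt_or_eq_of_le (hterm a) with hlt | heq
        · exact hlt
        · exact absurd ((gibbs_term (P a) (Q a) (hP a) (hQ a)).2.mp heq) hne
      rw [Finset.sum_sub_distrib, he] at hstrict
      linarith [hstrict, hz]
    · intro he; rw [he]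

/-- The Kahle distribution `P_Δ` on `𝒞₃` is a probability distribution satisfying the three
constraints `E[f₁] = 3p₁`, `E[f₂] = p₁³p₂`, `E[φ₂] = p₁³`, and it is the unique entropy
maximizer among all probability distributions on `𝒞₃` satisfying these constraints. -/
theorem delta3_is_unique_maximum_entropy
    (p₁ p₂ : ℝ) (hp₁ : p₁ ∈ Set.Ioo (0 : ℝ) 1) (hp₂ : p₂ ∈ Set.Ioo (0 : ℝ) 1) :
    (∀ C, 0 ≤ PDelta p₁ p₂ C) ∧ (∑ C : C3, PDelta p₁ p₂ C = 1) ∧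
    (∑ C : C3, (f1 C : ℝ) * PDelta p₁ p₂ C = 3 * p₁) ∧
    (∑ C : C3, (f2 C : ℝ) * PDelta p₁ p₂ C = p₁ ^ 3 * p₂) ∧
    (∑ C : C3, (phi2 C : ℝ) * PDelta p₁ p₂ C = p₁ ^ 3) ∧
    ∀ P : C3 → ℝ, (∀ C, 0 ≤ P C) → (∑ C, P C = 1) →
      (∑ C, (f1 C : ℝ) * P C = 3 * p₁) →
      (∑ C, (f2 C : ℝ) * P C = p₁ ^ 3 * p₂) →
      (∑ C, (phi2 C : ℝ) * P C = p₁ ^ 3) →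
      (-∑ C, P C * Real.log (P C)) ≤ (-∑ C, PDelta p₁ p₂ C * Real.log (PDelta p₁ p₂ C)) ∧
      ((-∑ C, P C * Real.log (P C)) = (-∑ C, PDelta p₁ p₂ C * Real.log (PDelta p₁ p₂ C)) ↔
        P = PDelta p₁ p₂) := by
  have hpos : ∀ C, 0 < PDelta p₁ p₂ C := PDelta_pos p₁ p₂ hp₁ hp₂
  have hsum1 : ∑ C : C3, PDelta p₁ p₂ C = 1 := by
    have e : ∑ C : C3, PDelta p₁ p₂ C = ∑ C : C3, (fun c => rawP p₁ p₂ c) C.1 := rfl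
    rw [e, key (fun c => rawP p₁ p₂ c)]
    norm_num [rawP, rf1, rf2, rphi2]
    ring
  have hsumf1 : ∑ C : C3, (f1 C : ℝ) * PDelta p₁ p₂ C = 3 * p₁ := by
    have e : ∑ C : C3, (f1 C : ℝ) * PDelta p₁ p₂ C
        = ∑ C : C3, (fun c => (rf1 c : ℝ) * rawP p₁ p₂ c) C.1 := rfl
    rw [e, key (fun c => (rf1 c : ℝ) * rawP p₁ p₂ c)]
    norm_num [rawP, rf1, rf2, rphi2]
    ring
  have hsumf2 : ∑ C : C3, (f2 C : ℝ) * PDelta p₁ p₂ C = p₁ ^ 3 * p₂ := by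
    have e : ∑ C : C3, (f2 C : ℝ) * PDelta p₁ p₂ C
        = ∑ C : C3, (fun c => (rf2 c : ℝ) * rawP p₁ p₂ c) C.1 := rfl
    rw [e, key (fun c => (rf2 c : ℝ) * rawP p₁ p₂ c)]
    norm_num [rawP, rf1, rf2, rphi2]
  have hsumphi2 : ∑ C : C3, (phi2 C : ℝ) * PDelta p₁ p₂ C = p₁ ^ 3 := by
    have e : ∑ C : C3, (phi2 C : ℝ) * PDelta p₁ p₂ C
        = ∑ C : C3, (fun c => (rphi2 c : ℝ) * rawP p₁ p₂ c) C.1 := rfl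
    rw [e, key (fun c => (rphi2 c : ℝ) * rawP p₁ p₂ c)]
    norm_num [rawP, rf1, rf2, rphi2]
    ring
  refine ⟨fun C => (hpos C).le, hsum1, hsumf1, hsumf2, hsumphi2, ?_⟩
  intro P hP hP1 hPf1 hPf2 hPphi2
  have hcross : ∑ C, P C * Real.log (PDelta p₁ p₂ C)
      = ∑ C, PDelta p₁ p₂ C * Real.log (PDelta p₁ p₂ C) := by
    rw [expect_log_PDelta p₁ p₂ hp₁ hp₂ P hP1 hPf1 hPf2 hPphi2,
      expect_log_PDelta p₁ p₂ hp₁ hp₂ (PDelta p₁ p₂) hsum1 hsumf1 hsumf2 hsumphi2]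
  have hg := gibbs P (PDelta p₁ p₂) hP hpos (by rw [hP1, hsum1])
  constructor
  · have := hg.1
    rw [hcross] at this
    linarith
  · constructor
    · intro he
      apply hg.2.mp
      rw [hcross]
      linarith [he]
    · intro he
      rw [he]
end
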